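/- Let m : Ω → S¹ ⊂ R² be a smooth map on an open set Ω ⊂ R² satisfying the anisotropic harmonic map equation Δm + |∇m|² m - λ²( ∇(∇·m) - (∇(∇·m)·m) m ) = 0. Define the stress tensor T_{αβ}(m) = e_λ(m) δ_{αβ} - ∂_α m · ∂_β m + λ² (∇·m) ∂_β m_α, where e_λ(m) = |∇m|²/2 - λ²(∇·m)²/2. Then T(m) is trace-free (tr T(m) = 0) and divergence-free (∂_α T_{αβ}(m) = 0 for β = 1, 2) on Ω. -/

import Mathlib

noncomputable def pd1 (f : ℂ → ℝ) (z : ℂ) : ℝ := fderiv ℝ f z 1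

noncomputable def pd2 (f : ℂ → ℝ) (z : ℂ) : ℝ := fderiv ℝ f z Complex.I

/-- planar divergence `∇·m` of `m = (m₁, m₂)`. -/
noncomputable def divg (m1 m2 : ℂ → ℝ) (z : ℂ) : ℝ := pd1 m1 z + pd2 m2 z

/-- `|∇m|²` for `m = (m₁, m₂)`. -/
noncomputable def gradSq2 (m1 m2 : ℂ → ℝ) (z : ℂ) : ℝ :=
  (pd1 m1 z) ^ 2 + (pd2 m1 z) ^ 2 + (pd1 m2 z) ^ 2 + (pd2 m2 z) ^ 2

/-- anisotropic energy density `e_λ(m) = |∇m|²/2 - λ²(∇·m)²/2`. -/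
noncomputable def eLam (lam : ℝ) (m1 m2 : ℂ → ℝ) (z : ℂ) : ℝ :=
  gradSq2 m1 m2 z / 2 - lam ^ 2 * (divg m1 m2 z) ^ 2 / 2

/-- stress tensor entry `T_{αβ} = e_λ δ_{αβ} - ∂_α m · ∂_β m + λ²(∇·m) ∂_β m_α`,
with `pa, pb` the partial derivatives `∂_α, ∂_β` and `ma` the component `m_α`. -/
noncomputable def T11 (lam : ℝ) (m1 m2 : ℂ → ℝ) (z : ℂ) : ℝ :=
  eLam lam m1 m2 z - ((pd1 m1 z) ^ 2 + (pd1 m2 z) ^ 2) + lam ^ 2 * divg m1 m2 z * pd1 m1 z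

noncomputable def T12 (lam : ℝ) (m1 m2 : ℂ → ℝ) (z : ℂ) : ℝ :=
  -(pd1 m1 z * pd2 m1 z + pd1 m2 z * pd2 m2 z) + lam ^ 2 * divg m1 m2 z * pd2 m1 z

noncomputable def T21 (lam : ℝ) (m1 m2 : ℂ → ℝ) (z : ℂ) : ℝ :=
  -(pd2 m1 z * pd1 m1 z + pd2 m2 z * pd1 m2 z) + lam ^ 2 * divg m1 m2 z * pd1 m2 z

noncomputable def T22 (lam : ℝ) (m1 m2 : ℂ → ℝ) (z : ℂ) : ℝ :=
  eLam lam m1 m2 z - ((pd2 m1 z) ^ 2 + (pd2 m2 z) ^ 2) + lam ^ 2 * divg m1 m2 z * pd2 m2 z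

def HasPD (v : ℂ) (f : ℂ → ℝ) (z : ℂ) (c : ℝ) : Prop :=
  DifferentiableAt ℝ f z ∧ fderiv ℝ f z v = c

namespace HasPD

variable {v : ℂ} {f g : ℂ → ℝ} {z : ℂ} {a b : ℝ}

lemma add (hf : HasPD v f z a) (hg : HasPD v g z b) :
    HasPD v (fun w => f w + g w) z (a + b) :=
  ⟨hf.1.add hg.1, by rw [fderiv_fun_add hf.1 hg.1]; simp [hf.2, hg.2]⟩

lemma sub (hf : HasPD v f z a) (hg : HasPD v g z b) :
    HasPD v (fun w => f w - g w) z (a - b) :=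
  ⟨hf.1.sub hg.1, by rw [fderiv_fun_sub hf.1 hg.1]; simp [hf.2, hg.2]⟩

lemma neg (hf : HasPD v f z a) : HasPD v (fun w => -f w) z (-a) :=
  ⟨hf.1.neg, by rw [fderiv_fun_neg]; simp [hf.2]⟩

lemma mul (hf : HasPD v f z a) (hg : HasPD v g z b) :
    HasPD v (fun w => f w * g w) z (f z * b + g z * a) :=
  ⟨hf.1.mul hg.1, by rw [fderiv_fun_mul hf.1 hg.1]; simp [hf.2, hg.2]⟩

lemma const_mul (hf : HasPD v f z a) (c : ℝ) :
    HasPD v (fun w => c * f w) z (c * a) :=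
  ⟨hf.1.const_mul c, by rw [fderiv_const_mul hf.1]; simp [hf.2]⟩

lemma div_const (hf : HasPD v f z a) (c : ℝ) :
    HasPD v (fun w => f w / c) z (a / c) := by
  have h := hf.const_mul c⁻¹
  have hfun : (fun w => f w / c) = fun w => c⁻¹ * f w := by funext w; ring
  exact ⟨by rw [hfun]; exact h.1, by rw [hfun, h.2]; ring⟩

lemma sq (hf : HasPD v f z a) : HasPD v (fun w => f w ^ 2) z (2 * f z * a) := by
  have h := hf.mul hf
  have hfun : (fun w => f w ^ 2) = fun w => f w * f w := by funext w; ring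
  exact ⟨by rw [hfun]; exact h.1, by rw [hfun, h.2]; ring⟩

lemma congr_c {c : ℝ} (hf : HasPD v f z a) (e : a = c) : HasPD v f z c :=
  ⟨hf.1, by rw [hf.2, e]⟩

end HasPD

lemma diffAt_of_contDiffOn {f : ℂ → ℝ} {Ω : Set ℂ} (hΩ : IsOpen Ω) {z : ℂ} (hz : z ∈ Ω)
    (hf : ContDiffOn ℝ (⊤ : ℕ∞) f Ω) : DifferentiableAt ℝ f z :=
  ((hf z hz).contDiffAt (hΩ.mem_nhds hz)).differentiableAt (by simp)

lemma contDiffOn_pdv {f : ℂ → ℝ} {Ω : Set ℂ} (hΩ : IsOpen Ω) (hf : ContDiffOn ℝ (⊤ : ℕ∞) f Ω) (v : ℂ) :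
    ContDiffOn ℝ (⊤ : ℕ∞) (fun z => fderiv ℝ f z v) Ω := by
  have h1 : ContDiffOn ℝ (⊤ : ℕ∞) (fderiv ℝ f) Ω := hf.fderiv_of_isOpen hΩ (by simp)
  exact (ContinuousLinearMap.apply ℝ ℝ v).contDiff.comp_contDiffOn h1

lemma pd_comm {f : ℂ → ℝ} {Ω : Set ℂ} (hΩ : IsOpen Ω) {z : ℂ} (hz : z ∈ Ω)
    (hf : ContDiffOn ℝ (⊤ : ℕ∞) f Ω) (v w : ℂ) :
    fderiv ℝ (fun x => fderiv ℝ f x v) z w = fderiv ℝ (fun x => fderiv ℝ f x w) z v := by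
  have hat : ContDiffAt ℝ (⊤ : ℕ∞) f z := (hf z hz).contDiffAt (hΩ.mem_nhds hz)
  have hdf : DifferentiableAt ℝ (fderiv ℝ f) z := by
    have h1 := hf.fderiv_of_isOpen (m := ((⊤ : ℕ∞) : WithTop ℕ∞)) hΩ (by simp)
    exact ((h1 z hz).contDiffAt (hΩ.mem_nhds hz)).differentiableAt (by simp)
  have hsymm := hat.isSymmSndFDerivAt (by simp only [minSmoothness_of_isRCLikeNormedField]; exact WithTop.coe_le_coe.mpr le_top)
  have h1 : ∀ u : ℂ, fderiv ℝ (fun x => fderiv ℝ f x u) z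
      = (fderiv ℝ (fderiv ℝ f) z).flip u := by
    intro u
    have h := fderiv_clm_apply hdf (differentiableAt_const u)
    simpa using h
  rw [h1 v, h1 w]
  simp only [ContinuousLinearMap.flip_apply]
  exact hsymm w v

/-- for a smooth `𝕊¹`-valued solution of the anisotropic harmonic map
equation on an open set `Ω ⊆ ℝ²`, the stress tensor is trace-free and divergence-free. -/
theorem stmt_11 (lam : ℝ) (Ω : Set ℂ) (hΩ : IsOpen Ω) (m1 m2 : ℂ → ℝ)
    (hm1 : ContDiffOn ℝ (⊤ : ℕ∞) m1 Ω) (hm2 : ContDiffOn ℝ (⊤ : ℕ∞) m2 Ω)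
    (hS1 : ∀ z ∈ Ω, (m1 z) ^ 2 + (m2 z) ^ 2 = 1)
    (hEL1 : ∀ z ∈ Ω,
      (pd1 (pd1 m1) z + pd2 (pd2 m1) z) + gradSq2 m1 m2 z * m1 z
        - lam ^ 2 * (pd1 (divg m1 m2) z
            - (pd1 (divg m1 m2) z * m1 z + pd2 (divg m1 m2) z * m2 z) * m1 z) = 0)
    (hEL2 : ∀ z ∈ Ω,
      (pd1 (pd1 m2) z + pd2 (pd2 m2) z) + gradSq2 m1 m2 z * m2 z
        - lam ^ 2 * (pd2 (divg m1 m2) z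
            - (pd1 (divg m1 m2) z * m1 z + pd2 (divg m1 m2) z * m2 z) * m2 z) = 0) :
    ∀ z ∈ Ω,
      T11 lam m1 m2 z + T22 lam m1 m2 z = 0 ∧
      pd1 (T11 lam m1 m2) z + pd2 (T21 lam m1 m2) z = 0 ∧
      pd1 (T12 lam m1 m2) z + pd2 (T22 lam m1 m2) z = 0 := by
  intro z hz
  have s11 : ContDiffOn ℝ (⊤ : ℕ∞) (pd1 m1) Ω := contDiffOn_pdv hΩ hm1 1
  have s21 : ContDiffOn ℝ (⊤ : ℕ∞) (pd2 m1) Ω := contDiffOn_pdv hΩ hm1 Complex.I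
  have s12 : ContDiffOn ℝ (⊤ : ℕ∞) (pd1 m2) Ω := contDiffOn_pdv hΩ hm2 1
  have s22 : ContDiffOn ℝ (⊤ : ℕ∞) (pd2 m2) Ω := contDiffOn_pdv hΩ hm2 Complex.I
  have sdv : ContDiffOn ℝ (⊤ : ℕ∞) (divg m1 m2) Ω := s11.add s22
  have P11_1 : HasPD 1 (pd1 m1) z (pd1 (pd1 m1) z) := ⟨diffAt_of_contDiffOn hΩ hz s11, rfl⟩
  have P11_2 : HasPD Complex.I (pd1 m1) z (pd2 (pd1 m1) z) :=
    ⟨diffAt_of_contDiffOn hΩ hz s11, rfl⟩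
  have P21_1 : HasPD 1 (pd2 m1) z (pd1 (pd2 m1) z) := ⟨diffAt_of_contDiffOn hΩ hz s21, rfl⟩
  have P21_2 : HasPD Complex.I (pd2 m1) z (pd2 (pd2 m1) z) :=
    ⟨diffAt_of_contDiffOn hΩ hz s21, rfl⟩
  have P12_1 : HasPD 1 (pd1 m2) z (pd1 (pd1 m2) z) := ⟨diffAt_of_contDiffOn hΩ hz s12, rfl⟩
  have P12_2 : HasPD Complex.I (pd1 m2) z (pd2 (pd1 m2) z) :=
    ⟨diffAt_of_contDiffOn hΩ hz s12, rfl⟩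
  have P22_1 : HasPD 1 (pd2 m2) z (pd1 (pd2 m2) z) := ⟨diffAt_of_contDiffOn hΩ hz s22, rfl⟩
  have P22_2 : HasPD Complex.I (pd2 m2) z (pd2 (pd2 m2) z) :=
    ⟨diffAt_of_contDiffOn hΩ hz s22, rfl⟩
  have PD_1 : HasPD 1 (divg m1 m2) z (pd1 (divg m1 m2) z) :=
    ⟨diffAt_of_contDiffOn hΩ hz sdv, rfl⟩
  have PD_2 : HasPD Complex.I (divg m1 m2) z (pd2 (divg m1 m2) z) :=
    ⟨diffAt_of_contDiffOn hΩ hz sdv, rfl⟩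
  have Pm1_1 : HasPD 1 m1 z (pd1 m1 z) := ⟨diffAt_of_contDiffOn hΩ hz hm1, rfl⟩
  have Pm1_2 : HasPD Complex.I m1 z (pd2 m1 z) := ⟨diffAt_of_contDiffOn hΩ hz hm1, rfl⟩
  have Pm2_1 : HasPD 1 m2 z (pd1 m2 z) := ⟨diffAt_of_contDiffOn hΩ hz hm2, rfl⟩
  have Pm2_2 : HasPD Complex.I m2 z (pd2 m2 z) := ⟨diffAt_of_contDiffOn hΩ hz hm2, rfl⟩
  have hsym1 : pd1 (pd2 m1) z = pd2 (pd1 m1) z := pd_comm hΩ hz hm1 Complex.I 1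
  have hsym2 : pd1 (pd2 m2) z = pd2 (pd1 m2) z := pd_comm hΩ hz hm2 Complex.I 1
  have hdv1 : pd1 (divg m1 m2) z = pd1 (pd1 m1) z + pd1 (pd2 m2) z := (P11_1.add P22_1).2
  have hdv2 : pd2 (divg m1 m2) z = pd2 (pd1 m1) z + pd2 (pd2 m2) z := (P11_2.add P22_2).2
  have hcfd : fderiv ℝ (fun w => m1 w ^ 2 + m2 w ^ 2) z = 0 := by
    have hev : (fun w => m1 w ^ 2 + m2 w ^ 2) =ᶠ[nhds z] fun _ => (1 : ℝ) := by
      filter_upwards [hΩ.mem_nhds hz] with w hw using hS1 w hw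
    rw [hev.fderiv_eq]; simp
  have cons1 : 2 * m1 z * pd1 m1 z + 2 * m2 z * pd1 m2 z = 0 := by
    have h := (Pm1_1.sq.add Pm2_1.sq).2
    rw [hcfd] at h
    simpa using h.symm
  have cons2 : 2 * m1 z * pd2 m1 z + 2 * m2 z * pd2 m2 z = 0 := by
    have h := (Pm1_2.sq.add Pm2_2.sq).2
    rw [hcfd] at h
    simpa using h.symm
  have E1 := hEL1 z hz
  have E2 := hEL2 z hz
  have e11 : pd1 (T11 lam m1 m2) z =
      (pd1 m1 z * pd1 (pd1 m1) z + pd2 m1 z * pd1 (pd2 m1) z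
        + pd1 m2 z * pd1 (pd1 m2) z + pd2 m2 z * pd1 (pd2 m2) z)
      - lam ^ 2 * divg m1 m2 z * pd1 (divg m1 m2) z
      - (2 * pd1 m1 z * pd1 (pd1 m1) z + 2 * pd1 m2 z * pd1 (pd1 m2) z)
      + lam ^ 2 * (pd1 (divg m1 m2) z * pd1 m1 z + divg m1 m2 z * pd1 (pd1 m1) z) :=
    ((((((((P11_1.sq.add P21_1.sq).add P12_1.sq).add P22_1.sq).div_const 2).sub
        ((PD_1.sq.const_mul (lam ^ 2)).div_const 2)).sub
        (P11_1.sq.add P12_1.sq)).add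
        ((PD_1.const_mul (lam ^ 2)).mul P11_1)).congr_c (by ring)).2
  have e21 : pd2 (T21 lam m1 m2) z =
      -(pd2 m1 z * pd2 (pd1 m1) z + pd1 m1 z * pd2 (pd2 m1) z
        + pd2 m2 z * pd2 (pd1 m2) z + pd1 m2 z * pd2 (pd2 m2) z)
      + lam ^ 2 * (pd2 (divg m1 m2) z * pd1 m2 z + divg m1 m2 z * pd2 (pd1 m2) z) :=
    (((((P21_2.mul P11_2).add (P22_2.mul P12_2)).neg).add
        ((PD_2.const_mul (lam ^ 2)).mul P12_2)).congr_c (by ring)).2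
  have e12 : pd1 (T12 lam m1 m2) z =
      -(pd1 m1 z * pd1 (pd2 m1) z + pd2 m1 z * pd1 (pd1 m1) z
        + pd1 m2 z * pd1 (pd2 m2) z + pd2 m2 z * pd1 (pd1 m2) z)
      + lam ^ 2 * (pd1 (divg m1 m2) z * pd2 m1 z + divg m1 m2 z * pd1 (pd2 m1) z) :=
    (((((P11_1.mul P21_1).add (P12_1.mul P22_1)).neg).add
        ((PD_1.const_mul (lam ^ 2)).mul P21_1)).congr_c (by ring)).2
  have e22 : pd2 (T22 lam m1 m2) z =
      (pd1 m1 z * pd2 (pd1 m1) z + pd2 m1 z * pd2 (pd2 m1) z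
        + pd1 m2 z * pd2 (pd1 m2) z + pd2 m2 z * pd2 (pd2 m2) z)
      - lam ^ 2 * divg m1 m2 z * pd2 (divg m1 m2) z
      - (2 * pd2 m1 z * pd2 (pd2 m1) z + 2 * pd2 m2 z * pd2 (pd2 m2) z)
      + lam ^ 2 * (pd2 (divg m1 m2) z * pd2 m2 z + divg m1 m2 z * pd2 (pd2 m2) z) :=
    ((((((((P11_2.sq.add P21_2.sq).add P12_2.sq).add P22_2.sq).div_const 2).sub
        ((PD_2.sq.const_mul (lam ^ 2)).div_const 2)).sub
        (P21_2.sq.add P22_2.sq)).add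
        ((PD_2.const_mul (lam ^ 2)).mul P22_2)).congr_c (by ring)).2
  refine ⟨by simp only [T11, T22, eLam, gradSq2, divg]; ring, ?_, ?_⟩
  · rw [e11, e21, hdv1, hdv2, hsym1, hsym2]
    simp only [hdv1, hdv2, hsym1, hsym2] at E1 E2
    linear_combination (-(pd1 m1 z)) * E1 + (-(pd1 m2 z)) * E2 +
      ((gradSq2 m1 m2 z + lam ^ 2 * ((pd1 (pd1 m1) z + pd2 (pd1 m2) z) * m1 z
        + (pd2 (pd1 m1) z + pd2 (pd2 m2) z) * m2 z)) / 2) * cons1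
  · rw [e12, e22, hdv1, hdv2, hsym1, hsym2]
    simp only [hdv1, hdv2, hsym1, hsym2] at E1 E2
    linear_combination (-(pd2 m1 z)) * E1 + (-(pd2 m2 z)) * E2 +
      ((gradSq2 m1 m2 z + lam ^ 2 * ((pd1 (pd1 m1) z + pd2 (pd1 m2) z) * m1 z
        + (pd2 (pd1 m1) z + pd2 (pd2 m2) z) * m2 z)) / 2) * cons2
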